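/- arXiv:math/0601535 — 3 statements merged into one kernel-verified Lean document; each statement's English description precedes it below -/
import Mathlib

section
/- Define ω(λ)² via the series ω(λ)² = −(Σ_{k≥0} (−1)^k sin^{2k+1}(α/2) (λ²−1)^{k+1/2}/(2k+1))², equivalently ω(λ) = (1/2) ln((1+i√(λ²−1)sin(α/2))/(1−i√(λ²−1)sin(α/2))). Then ω(λ)² is analytic in a neighborhood of λ = 1 and has the expansion ω(λ)² = −2u sin²(α/2)(1 + u/2 − (4/3) u sin²(α/2) + O(u²)) with u = λ − 1, where the O(u²) term is uniform for α in compact subsets of ℂ. -/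
open Complex

/-- The paper's `ω(λ)²`, defined via the series
`ω(λ) = i Σ_{k≥0} (−1)^k sin^{2k+1}(α/2) (λ²−1)^{k+1/2}/(2k+1)`, so that
`ω(λ)² = −(λ²−1)·(Σ_{k≥0} (−1)^k sin^{2k+1}(α/2) (λ²−1)^k/(2k+1))²`. -/
noncomputable def omegaSq (α z : ℂ) : ℂ :=
  -((z ^ 2 - 1) *
    (∑' k : ℕ, (-1 : ℂ) ^ k * Complex.sin (α / 2) ^ (2 * k + 1)
        * (z ^ 2 - 1) ^ k / (2 * k + 1)) ^ 2)

/-!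
With `t = sin²(α/2) (z² − 1)` and `G(t) = ∑ (−1)ᵏ tᵏ / (2k + 1)`, a power series of radius `1`,
the defining series is `sin(α/2) · G(t)`, so `ω² = −t G(t)²`. This is analytic at `z = 1`,
where `t = 0`. Since `G(t) = 1 − t/3 + O(t²)`, we get `ω² = −t + 2t²/3 + O(t³)`, and substituting
`t = sin²(α/2) (2u + u²)` gives the expansion; the constants depend on `α` only through a bound
for `‖sin²(α/2)‖`, which is uniform on compact sets.
-/

noncomputable def arctanCoeff (k : ℕ) : ℂ := (-1) ^ k / (2 * k + 1)

/-- `arctanSeries t = arctan (√t) / √t`. -/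
noncomputable def arctanSeries (t : ℂ) : ℂ := ∑' k : ℕ, arctanCoeff k * t ^ k

lemma norm_arctanCoeff_le_one (k : ℕ) : ‖arctanCoeff k‖ ≤ 1 := by
  have hden : (2 * (k : ℂ) + 1) = ((2 * k + 1 : ℕ) : ℂ) := by push_cast; ring
  rw [arctanCoeff, hden, norm_div, norm_pow, norm_neg, norm_one, one_pow, Complex.norm_natCast,
    div_le_one (by positivity)]
  exact_mod_cast Nat.le_add_left 1 (2 * k)

lemma norm_arctanCoeff_mul_pow_le (t : ℂ) (k : ℕ) : ‖arctanCoeff k * t ^ k‖ ≤ ‖t‖ ^ k := by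
  rw [norm_mul, norm_pow]
  exact mul_le_of_le_one_left (by positivity) (norm_arctanCoeff_le_one k)

lemma arctanSeries_analyticAt_zero : AnalyticAt ℂ arctanSeries 0 := by
  set p := FormalMultilinearSeries.ofScalars ℂ arctanCoeff
  have hradius : 1 ≤ p.radius := p.le_radius_of_bound 1 fun n => by
    simpa [p, FormalMultilinearSeries.ofScalars_norm] using norm_arctanCoeff_le_one n
  have hsum : arctanSeries = p.sum := funext fun t => by
    simp only [arctanSeries, p, FormalMultilinearSeries.sum,
      FormalMultilinearSeries.ofScalars_apply_eq', smul_eq_mul]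
  rw [hsum]
  exact (p.hasFPowerSeriesOnBall (zero_lt_one.trans_le hradius)).analyticAt

lemma norm_arctanSeries_sub_le {t : ℂ} (ht : ‖t‖ ≤ 1 / 2) :
    ‖arctanSeries t - (1 - t / 3)‖ ≤ 2 * ‖t‖ ^ 2 := by
  set f : ℕ → ℂ := fun k => arctanCoeff k * t ^ k
  have hf : Summable f := Summable.of_norm_bounded
    (summable_geometric_of_lt_one (norm_nonneg t) (by linarith)) (norm_arctanCoeff_mul_pow_le t)
  have htail : arctanSeries t - (1 - t / 3) = ∑' k, f (k + 2) := by
    have hf0 : f 0 = 1 := by simp [f, arctanCoeff]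
    have hf1 : f 1 = -(t / 3) := by simp [f, arctanCoeff]; ring
    change ∑' k, f k - _ = _
    rw [hf.tsum_eq_zero_add, ((summable_nat_add_iff 1).2 hf).tsum_eq_zero_add, hf0, hf1]
    ring
  have hbound (k : ℕ) : ‖f (k + 2)‖ ≤ ‖t‖ ^ 2 * (1 / 2) ^ k :=
    calc ‖f (k + 2)‖ ≤ ‖t‖ ^ (k + 2) := norm_arctanCoeff_mul_pow_le t (k + 2)
      _ = ‖t‖ ^ 2 * ‖t‖ ^ k := by ring
      _ ≤ ‖t‖ ^ 2 * (1 / 2) ^ k := by gcongr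
  have hgeom : HasSum (fun k : ℕ => ‖t‖ ^ 2 * (1 / 2) ^ k) (2 * ‖t‖ ^ 2) := by
    rw [mul_comm]
    exact hasSum_geometric_two.mul_left _
  rw [htail]
  exact tsum_of_norm_bounded hgeom hbound

lemma norm_arctanSeries_sq_sub_le {t : ℂ} (ht : ‖t‖ ≤ 1 / 2) :
    ‖arctanSeries t ^ 2 - (1 - 2 * t / 3)‖ ≤ 6 * ‖t‖ ^ 2 := by
  set e := arctanSeries t - (1 - t / 3)
  have he : ‖e‖ ≤ 2 * ‖t‖ ^ 2 := norm_arctanSeries_sub_le ht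
  have hlin : ‖1 - t / 3‖ ≤ 7 / 6 := by
    refine (norm_sub_le _ _).trans ?_
    rw [norm_one, norm_div, Complex.norm_ofNat]
    linarith
  have ht2 : ‖t‖ ^ 2 ≤ 1 / 4 := by nlinarith [norm_nonneg t]
  calc ‖arctanSeries t ^ 2 - (1 - 2 * t / 3)‖ = ‖t ^ 2 / 9 + 2 * e * (1 - t / 3) + e ^ 2‖ := by
        congr 1; ring
    _ ≤ ‖t‖ ^ 2 / 9 + 2 * ‖e‖ * ‖1 - t / 3‖ + ‖e‖ ^ 2 := by
        refine (norm_add₃_le).trans_eq ?_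
        simp only [norm_div, norm_mul, norm_pow, Complex.norm_ofNat]
    _ ≤ ‖t‖ ^ 2 / 9 + 2 * (2 * ‖t‖ ^ 2) * (7 / 6) + (2 * ‖t‖ ^ 2) ^ 2 := by gcongr
    _ ≤ 6 * ‖t‖ ^ 2 := by nlinarith

lemma omegaSq_eq (α z : ℂ) :
    omegaSq α z = -(Complex.sin (α / 2) ^ 2 * (z ^ 2 - 1) *
      arctanSeries (Complex.sin (α / 2) ^ 2 * (z ^ 2 - 1)) ^ 2) := by
  set s := Complex.sin (α / 2)
  have hseries : ∑' k : ℕ, (-1 : ℂ) ^ k * s ^ (2 * k + 1) * (z ^ 2 - 1) ^ k / (2 * k + 1) =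
      s * arctanSeries (s ^ 2 * (z ^ 2 - 1)) := by
    rw [arctanSeries, ← tsum_mul_left]
    congr 1 with k
    rw [arctanCoeff, mul_pow, ← pow_mul, pow_succ]
    ring
  rw [omegaSq, hseries]
  ring

lemma omegaSq_analyticAt_one (α : ℂ) : AnalyticAt ℂ (omegaSq α) 1 := by
  set s := Complex.sin (α / 2)
  have hinner : AnalyticAt ℂ (fun z : ℂ => s ^ 2 * (z ^ 2 - 1)) 1 := by fun_prop
  have hcomp : AnalyticAt ℂ (fun z : ℂ => arctanSeries (s ^ 2 * (z ^ 2 - 1))) 1 :=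
    arctanSeries_analyticAt_zero.comp_of_eq hinner (by simp)
  rw [show omegaSq α = _ from funext (omegaSq_eq α)]
  exact (hinner.mul (hcomp.pow 2)).neg

lemma norm_neg_mul_arctanSeries_sq_sub_le {t : ℂ} (ht : ‖t‖ ≤ 1 / 2) :
    ‖-(t * arctanSeries t ^ 2) - (-t + 2 * t ^ 2 / 3)‖ ≤ 6 * ‖t‖ ^ 3 :=
  calc ‖-(t * arctanSeries t ^ 2) - (-t + 2 * t ^ 2 / 3)‖
        = ‖t‖ * ‖arctanSeries t ^ 2 - (1 - 2 * t / 3)‖ := by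
          rw [← norm_mul, ← norm_neg]; congr 1; ring
    _ ≤ ‖t‖ * (6 * ‖t‖ ^ 2) := by gcongr; exact norm_arctanSeries_sq_sub_le ht
    _ = 6 * ‖t‖ ^ 3 := by ring

lemma norm_one_add_sq_sub_one_le {u : ℂ} (hu : ‖u‖ ≤ 1 / 2) : ‖(1 + u) ^ 2 - 1‖ ≤ 5 / 2 * ‖u‖ :=
  calc ‖(1 + u) ^ 2 - 1‖ = ‖u‖ * ‖2 + u‖ := by rw [← norm_mul]; congr 1; ring
    _ ≤ ‖u‖ * (5 / 2) := by
        gcongr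
        exact (norm_add_le _ _).trans (by rw [Complex.norm_ofNat]; linarith)
    _ = 5 / 2 * ‖u‖ := by ring

lemma norm_omegaSq_one_add_sub_le {α u : ℂ} {M : ℝ} (hs : ‖Complex.sin (α / 2) ^ 2‖ ≤ M)
    (hu : ‖u‖ ≤ 1 / 2) (huM : 5 * M * ‖u‖ ≤ 1) :
    ‖omegaSq α (1 + u)
        - (-(2 * u * Complex.sin (α / 2) ^ 2) * (1 + u / 2 - (4 / 3) * u * Complex.sin (α / 2) ^ 2))‖
      ≤ (94 * M ^ 2 + 3 * M) * ‖Complex.sin (α / 2) ^ 2‖ * ‖u‖ ^ 3 := by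
  rw [omegaSq_eq]
  set s := Complex.sin (α / 2)
  set t := s ^ 2 * ((1 + u) ^ 2 - 1)
  set a := ‖s ^ 2‖
  have hM : 0 ≤ M := (norm_nonneg _).trans hs
  have ht : ‖t‖ ≤ 5 / 2 * a * ‖u‖ :=
    calc ‖t‖ = a * ‖(1 + u) ^ 2 - 1‖ := norm_mul _ _
      _ ≤ a * (5 / 2 * ‖u‖) := by gcongr; exact norm_one_add_sq_sub_one_le hu
      _ = 5 / 2 * a * ‖u‖ := by ring
  have hsplit : -(t * arctanSeries t ^ 2) - (-(2 * u * s ^ 2) * (1 + u / 2 - (4 / 3) * u * s ^ 2))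
      = (-(t * arctanSeries t ^ 2) - (-t + 2 * t ^ 2 / 3))
        + 2 / 3 * (s ^ 2) ^ 2 * (u ^ 3 * (4 + u)) := by
    ring
  have hcubic : ‖-(t * arctanSeries t ^ 2) - (-t + 2 * t ^ 2 / 3)‖ ≤ 94 * M ^ 2 * a * ‖u‖ ^ 3 :=
    calc _ ≤ 6 * ‖t‖ ^ 3 := norm_neg_mul_arctanSeries_sq_sub_le
          (ht.trans (by nlinarith [mul_le_mul_of_nonneg_right hs (norm_nonneg u)]))
      _ ≤ 6 * (5 / 2 * a * ‖u‖) ^ 3 := by gcongr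
      _ = 375 / 4 * a ^ 2 * (a * ‖u‖ ^ 3) := by ring
      _ ≤ 94 * M ^ 2 * (a * ‖u‖ ^ 3) := by gcongr; norm_num
      _ = 94 * M ^ 2 * a * ‖u‖ ^ 3 := by ring
  have hquartic : ‖2 / 3 * (s ^ 2) ^ 2 * (u ^ 3 * (4 + u))‖ ≤ 3 * M * a * ‖u‖ ^ 3 :=
    calc _ = 2 / 3 * (a * a) * (‖u‖ ^ 3 * ‖4 + u‖) := by
          simp only [norm_mul, norm_pow, norm_div, Complex.norm_ofNat, a, sq]
      _ ≤ 2 / 3 * (M * a) * (‖u‖ ^ 3 * (9 / 2)) := by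
          gcongr
          exact (norm_add_le _ _).trans (by rw [Complex.norm_ofNat]; linarith)
      _ = 3 * M * a * ‖u‖ ^ 3 := by ring
  rw [hsplit]
  calc _ ≤ _ := norm_add_le _ _
    _ ≤ 94 * M ^ 2 * a * ‖u‖ ^ 3 + 3 * M * a * ‖u‖ ^ 3 := add_le_add hcubic hquartic
    _ = (94 * M ^ 2 + 3 * M) * a * ‖u‖ ^ 3 := by ring

/-- `ω(λ)²` is analytic in a neighborhood of `λ = 1` and has
the expansion `ω(λ)² = −2u sin²(α/2)(1 + u/2 − (4/3)u sin²(α/2) + O(u²))`,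
`u = λ − 1`, uniformly for `α` in compact subsets of `ℂ`. -/
theorem omegaSq_expansion (K : Set ℂ) (hK : IsCompact K) :
    ∃ C > (0 : ℝ), ∃ δ > (0 : ℝ), ∀ α ∈ K,
      AnalyticAt ℂ (omegaSq α) 1 ∧
      ∀ u : ℂ, ‖u‖ < δ →
        ‖omegaSq α (1 + u)
            - (-(2 * u * Complex.sin (α / 2) ^ 2)
                * (1 + u / 2 - (4 / 3) * u * Complex.sin (α / 2) ^ 2))‖
          ≤ C * ‖Complex.sin (α / 2) ^ 2‖ * ‖u‖ ^ 3 := by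
  obtain ⟨B, hB⟩ := hK.exists_bound_of_continuousOn
    (f := fun α => Complex.sin (α / 2) ^ 2) (by fun_prop)
  set M := max B 1
  have hM : 0 < M := lt_max_of_lt_right one_pos
  refine ⟨94 * M ^ 2 + 3 * M, by positivity, min (1 / 2) (1 / (5 * M)), by positivity,
    fun α hα => ⟨omegaSq_analyticAt_one α, fun u hδ => ?_⟩⟩
  have hu : ‖u‖ ≤ 1 / 2 := (hδ.trans_le (min_le_left _ _)).le
  have huM : 5 * M * ‖u‖ ≤ 1 := by
    have := (hδ.trans_le (min_le_right _ _)).le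
    rwa [le_div_iff₀' (by positivity)] at this
  exact norm_omegaSq_one_add_sub_le ((hB α hα).trans (le_max_left _ _)) hu huM
end

section
/- As n → ∞, Σ_{k=1}^{n} k ln k = (n²/2 + n/2 + 1/12) ln n − n²/4 + 1/12 − ζ'(−1) + o(1), where ζ is the Riemann zeta function. -/
/-!
`zetaApprox N s = ∑_{n ≤ N} n^{-s} + N^{1-s}/(s-1) - N^{-s}/2 + s N^{-s-1}/12` is the
Euler–Maclaurin truncation of `ζ(s)`. The Euler–Maclaurin formula with the Bernoulli polynomial
`B₃` on `[N, N+1]` bounds its increments by `O(|s|³ N^{-Re s - 3})`, so it converges uniformly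
on a disc that contains `-1`, reaches into `Re s > 1` and avoids the pole. On `Re s > 1` the limit
is `ζ`, so by the identity theorem it is `ζ` on the whole disc, and by Weierstrass the derivatives
at `-1` converge to `ζ'(-1)`. The derivative of `zetaApprox N` at `-1` is exactly minus the
error term of the theorem.
-/

open Filter Topology Set Complex Metric intervalIntegral

theorem integral_bernoulliFun_three_smul {E : Type*} [NormedAddCommGroup E] [NormedSpace ℝ E]
    [CompleteSpace E] {F f f₁ f₂ f₃ : ℝ → E} {a : ℝ}
    (hF : ∀ x ∈ uIcc a (a + 1), HasDerivAt F (f x) x)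
    (hf : ∀ x ∈ uIcc a (a + 1), HasDerivAt f (f₁ x) x)
    (hf₁ : ∀ x ∈ uIcc a (a + 1), HasDerivAt f₁ (f₂ x) x)
    (hf₂ : ∀ x ∈ uIcc a (a + 1), HasDerivAt f₂ (f₃ x) x)
    (hf₃ : ContinuousOn f₃ (uIcc a (a + 1))) :
    ∫ x in a..a + 1, (6⁻¹ * bernoulliFun 3 (x - a)) • f₃ x
      = (2⁻¹ : ℝ) • (f a + f (a + 1)) - (F (a + 1) - F a) - (12⁻¹ : ℝ) • (f₁ (a + 1) - f₁ a) := by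
  have hB (k : ℕ) (x : ℝ) :
      HasDerivAt (fun x => bernoulliFun k (x - a)) (k * bernoulliFun (k - 1) (x - a)) x :=
    (hasDerivAt_bernoulliFun k (x - a)).comp_sub_const x a
  have hΦ : ∀ x ∈ uIcc a (a + 1), HasDerivAt
      (fun x => (6⁻¹ * bernoulliFun 3 (x - a)) • f₂ x - (2⁻¹ * bernoulliFun 2 (x - a)) • f₁ x
        + bernoulliFun 1 (x - a) • f x - F x)
      ((6⁻¹ * bernoulliFun 3 (x - a)) • f₃ x) x := by
    intro x hx
    convert ((((hB 3 x).const_mul 6⁻¹).fun_smul (hf₂ x hx)).fun_sub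
      (((hB 2 x).const_mul 2⁻¹).fun_smul (hf₁ x hx))).fun_add ((hB 1 x).fun_smul (hf x hx))
      |>.fun_sub (hF x hx) using 1
    norm_num
    module
  rw [integral_eq_sub_of_hasDerivAt hΦ]
  · have hB3 : bernoulli 3 = 0 := bernoulli_eq_zero_of_odd (by decide) (by norm_num)
    simp [bernoulliFun_eval_zero, bernoulliFun_endpoints_eq_of_ne_one, hB3]
    module
  · exact (ContinuousOn.smul (by fun_prop) hf₃).intervalIntegrable

theorem hasDerivAt_ofReal_cpow_const_of_pos {x : ℝ} (hx : 0 < x) (r : ℂ) :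
    HasDerivAt (fun y : ℝ => (y : ℂ) ^ r) (r * x ^ (r - 1)) x := by
  simpa using ((hasDerivAt_id (x : ℂ)).cpow_const (ofReal_mem_slitPlane.mpr hx)).comp_ofReal

theorem tendsto_natCast_cpow_atTop_zero {w : ℂ} (hw : w.re < 0) :
    Tendsto (fun N : ℕ => (N : ℂ) ^ w) atTop (𝓝 0) := by
  rw [tendsto_zero_iff_norm_tendsto_zero]
  simp_rw [norm_natCast_cpow_of_re_ne_zero _ hw.ne]
  simpa [Function.comp_def] using
    (tendsto_rpow_neg_atTop (neg_pos.mpr hw)).comp tendsto_natCast_atTop_atTop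

theorem tendstoUniformlyOn_of_summable_norm_sub {β F : Type*} [NormedAddCommGroup F]
    [CompleteSpace F] {f : ℕ → β → F} {u : ℕ → ℝ} {s : Set β} (hu : Summable u)
    (hfu : ∀ n, ∀ x ∈ s, ‖f (n + 1) x - f n x‖ ≤ u n) :
    TendstoUniformlyOn f (fun x => f 0 x + ∑' n, (f (n + 1) x - f n x)) atTop s := by
  have h := tendstoUniformlyOn_tsum_nat hu hfu
  rw [Metric.tendstoUniformlyOn_iff] at h ⊢
  intro ε hε
  filter_upwards [h ε hε] with N hN x hx
  have hxN := hN x hx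
  rwa [Finset.sum_range_sub (f · x), ← dist_add_left (f 0 x), add_sub_cancel] at hxN

theorem tendsto_deriv_of_summable_norm_sub {f : ℕ → ℂ → ℂ} {g : ℂ → ℂ} {U : Set ℂ} {u : ℕ → ℝ}
    {z₀ z : ℂ} (hU : IsOpen U) (hUc : IsPreconnected U) (hf : ∀ n, DifferentiableOn ℂ (f n) U)
    (hu : Summable u) (hfu : ∀ n, ∀ s ∈ U, ‖f (n + 1) s - f n s‖ ≤ u n)
    (hg : AnalyticOnNhd ℂ g U) (hz₀ : z₀ ∈ U)
    (hfg : ∀ᶠ s in 𝓝 z₀, Tendsto (f · s) atTop (𝓝 (g s))) (hz : z ∈ U) :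
    Tendsto (fun n => deriv (f n) z) atTop (𝓝 (deriv g z)) := by
  have hlim := (tendstoUniformlyOn_of_summable_norm_sub hu hfu).tendstoLocallyUniformlyOn
  have hf' : ∀ᶠ n in atTop, DifferentiableOn ℂ (f n) U := Eventually.of_forall hf
  have hGg : EqOn _ g U :=
    ((hlim.differentiableOn hf' hU).analyticOnNhd hU).eqOn_of_preconnected_of_eventuallyEq
      hg hUc hz₀ <| by
        filter_upwards [hfg, hU.mem_nhds hz₀] with s hs hsU
        exact tendsto_nhds_unique (hlim.tendsto_at hsU) hs
  rw [← (hGg.eventuallyEq_of_mem (hU.mem_nhds hz)).deriv_eq]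
  exact (hlim.deriv hf' hU).tendsto_at hz

noncomputable def zetaApprox (N : ℕ) (s : ℂ) : ℂ :=
  ∑ n ∈ Finset.Icc 1 N, (n : ℂ) ^ (-s) + (N : ℂ) ^ (1 - s) / (s - 1) - (N : ℂ) ^ (-s) / 2
    + s * (N : ℂ) ^ (-s - 1) / 12

theorem zetaApprox_succ_sub {s : ℂ} (hs : s ≠ 1) {N : ℕ} (hN : N ≠ 0) :
    zetaApprox (N + 1) s - zetaApprox N s = -(s * (s + 1) * (s + 2)) *
      ∫ x in (N : ℝ)..N + 1, (6⁻¹ * bernoulliFun 3 (x - N) : ℝ) * (x : ℂ) ^ (-s - 3) := by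
  have hpos : ∀ x ∈ uIcc (N : ℝ) (N + 1), 0 < x := by
    intro x hx
    rw [uIcc_of_le (by linarith)] at hx
    exact lt_of_lt_of_le (by positivity) hx.1
  have hmonomial (c r d r' : ℂ) (hd : d = c * r) (hr : r' = r - 1) {x : ℝ} (hx : 0 < x) :
      HasDerivAt (fun y : ℝ => c * (y : ℂ) ^ r) (d * (x : ℂ) ^ r') x := by
    simpa [hd, hr, mul_assoc] using (hasDerivAt_ofReal_cpow_const_of_pos hx r).const_mul c
  have hs' : 1 - s ≠ 0 := sub_ne_zero.mpr hs.symm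
  have key := integral_bernoulliFun_three_smul (E := ℂ) (a := N)
    (F := fun x => (1 - s)⁻¹ * (x : ℂ) ^ (1 - s)) (f := fun x => 1 * (x : ℂ) ^ (-s))
    (f₁ := fun x => -s * (x : ℂ) ^ (-s - 1)) (f₂ := fun x => s * (s + 1) * (x : ℂ) ^ (-s - 2))
    (f₃ := fun x => -(s * (s + 1) * (s + 2)) * (x : ℂ) ^ (-s - 3))
    (fun x hx => hmonomial _ _ _ _ (inv_mul_cancel₀ hs').symm (by ring) (hpos x hx))
    (fun x hx => hmonomial _ _ _ _ (by ring) (by ring) (hpos x hx))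
    (fun x hx => hmonomial _ _ _ _ (by ring) (by ring) (hpos x hx))
    (fun x hx => hmonomial _ _ _ _ (by ring) (by ring) (hpos x hx))
    (fun x hx => ((hmonomial _ _ _ _ rfl rfl (hpos x hx)).continuousAt.continuousWithinAt))
  simp only [Complex.real_smul] at key
  rw [← intervalIntegral.integral_const_mul]
  simp_rw [mul_left_comm (-(s * (s + 1) * (s + 2)))]
  rw [key]
  simp only [zetaApprox, Finset.sum_Icc_succ_top (Nat.le_add_left 1 N), one_mul]
  push_cast
  field_simp [sub_ne_zero.mpr hs]
  ring

theorem exists_norm_zetaApprox_succ_sub_le : ∃ C, 0 ≤ C ∧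
    ∀ s : ℂ, s ≠ 1 → -3 ≤ s.re → ∀ N : ℕ, N ≠ 0 →
      ‖zetaApprox (N + 1) s - zetaApprox N s‖ ≤ C * ‖s * (s + 1) * (s + 2)‖ * N ^ (-s.re - 3) := by
  obtain ⟨C, hC⟩ := isCompact_Icc.exists_bound_of_continuousOn
    (f := fun t => 6⁻¹ * bernoulliFun 3 t) (s := Icc 0 1) (by fun_prop)
  refine ⟨C, (norm_nonneg _).trans (hC 0 (by simp)), fun s hs hre N hN => ?_⟩
  have hN' : (0 : ℝ) < N := by positivity
  have hbound : ∀ x ∈ uIoc (N : ℝ) (N + 1),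
      ‖(6⁻¹ * bernoulliFun 3 (x - N) : ℝ) * (x : ℂ) ^ (-s - 3)‖ ≤ C * N ^ (-s.re - 3) := by
    intro x hx
    rw [uIoc_of_le (by linarith)] at hx
    have hx0 : 0 < x := hN'.trans hx.1
    rw [norm_mul, norm_real, norm_cpow_eq_rpow_re_of_pos hx0]
    have hB := hC (x - N) ⟨by linarith [hx.1], by linarith [hx.2]⟩
    have hpow : x ^ (-s - 3).re ≤ (N : ℝ) ^ (-s.re - 3) := by
      rw [show (-s - 3).re = -s.re - 3 by simp]
      exact Real.rpow_le_rpow_of_nonpos hN' hx.1.le (by linarith)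
    exact mul_le_mul hB hpow (by positivity) ((norm_nonneg _).trans hB)
  have hint := intervalIntegral.norm_integral_le_of_norm_le_const hbound
  rw [add_sub_cancel_left, abs_one, mul_one] at hint
  rw [zetaApprox_succ_sub hs hN, norm_mul, norm_neg]
  calc _ ≤ ‖s * (s + 1) * (s + 2)‖ * (C * N ^ (-s.re - 3)) := by gcongr
    _ = _ := by ring

theorem differentiableAt_zetaApprox {N : ℕ} (hN : N ≠ 0) {s : ℂ} (hs : s ≠ 1) :
    DifferentiableAt ℂ (zetaApprox N) s := by
  have hN' : (N : ℂ) ≠ 0 := Nat.cast_ne_zero.mpr hN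
  have hs' : s - 1 ≠ 0 := sub_ne_zero.mpr hs
  unfold zetaApprox
  fun_prop (disch := first | assumption | (left; simp at *; omega))

theorem tendsto_zetaApprox {s : ℂ} (hs : 1 < s.re) :
    Tendsto (fun N => zetaApprox N s) atTop (𝓝 (riemannZeta s)) := by
  have hzeta : HasSum (fun n : ℕ => 1 / (n + 1 : ℂ) ^ s) (riemannZeta s) := by
    have hsummable : Summable fun n : ℕ => 1 / (n + 1 : ℂ) ^ s := by
      simpa using (summable_nat_add_iff 1).mpr (Complex.summable_one_div_nat_cpow.mpr hs)
    exact zeta_eq_tsum_one_div_nat_add_one_cpow hs ▸ hsummable.hasSum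
  have hsum : Tendsto (fun N : ℕ => ∑ n ∈ Finset.Icc 1 N, (n : ℂ) ^ (-s)) atTop
      (𝓝 (riemannZeta s)) := by
    convert hzeta.tendsto_sum_nat using 2 with N
    induction N with
    | zero => simp
    | succ N ih =>
      rw [Finset.sum_Icc_succ_top (by omega), Finset.sum_range_succ, ih]
      simp [cpow_neg]
  have hdecay {w : ℂ} (hw : w.re < 0) := tendsto_natCast_cpow_atTop_zero hw
  have h := ((hsum.add ((hdecay (w := 1 - s) (by simp [hs])).div_const (s - 1))).sub
    ((hdecay (w := -s) (by simp; linarith)).div_const 2)).add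
    (((hdecay (w := -s - 1) (by simp; linarith)).const_mul s).div_const 12)
  simpa [zetaApprox] using h

theorem hasDerivAt_zetaApprox_neg_one {N : ℕ} (hN : N ≠ 0) :
    HasDerivAt (zetaApprox N) (-((∑ k ∈ Finset.Icc 1 N, (k : ℝ) * Real.log k)
      - (((N : ℝ) ^ 2 / 2 + N / 2 + 1 / 12) * Real.log N - (N : ℝ) ^ 2 / 4 + 1 / 12) : ℝ))
      (-1) := by
  have hpow {n : ℕ} (hn : n ≠ 0) {e : ℂ → ℂ} {e' : ℂ} (he : HasDerivAt e e' (-1)) :=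
    he.const_cpow (c := (n : ℂ)) (Or.inl (Nat.cast_ne_zero.mpr hn))
  have hsum := HasDerivAt.fun_sum (u := Finset.Icc 1 N) fun n hn =>
    hpow (n := n) (by simp at hn; omega) (hasDerivAt_neg (-1 : ℂ))
  have h := ((hsum.fun_add ((hpow hN ((hasDerivAt_id _).const_sub 1)).fun_div
    ((hasDerivAt_id _).sub_const 1) (by norm_num))).fun_sub
    ((hpow hN (hasDerivAt_neg _)).div_const 2)).fun_add
    (((hasDerivAt_id _).fun_mul (hpow hN ((hasDerivAt_neg _).sub_const 1))).div_const 12)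
  refine h.congr_deriv ?_
  norm_num [cpow_two, ← natCast_log]
  push_cast
  ring

theorem tendsto_deriv_zetaApprox_neg_one :
    Tendsto (fun N => deriv (zetaApprox N) (-1)) atTop (𝓝 (deriv riemannZeta (-1))) := by
  -- a convex neighbourhood of `-1` in `Re s > -2` that meets `Re s > 1` but avoids the pole
  set U := ball (-4⁻¹ + I) (3 / 2)
  have hU : ∀ s ∈ U, -7 / 4 < s.re ∧ ‖s‖ < 3 := fun s hs => by
    rw [mem_ball, dist_eq] at hs
    have hre := abs_re_le_norm (s - (-4⁻¹ + I))
    have hcenter := norm_le_abs_re_add_abs_im (-4⁻¹ + I)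
    norm_num at hre hcenter
    exact ⟨by linarith [abs_le.mp hre], by linarith [norm_le_norm_add_norm_sub' s (-4⁻¹ + I)]⟩
  have hpole : ∀ s ∈ U, s ≠ 1 := by
    rintro s hs rfl
    rw [mem_ball, dist_eq, ← sq_lt_sq₀ (norm_nonneg _) (by norm_num), Complex.sq_norm,
      normSq_apply] at hs
    norm_num at hs
  have hmem (z : ℂ) (hz : ‖z - (-4⁻¹ + I)‖ ^ 2 < (3 / 2) ^ 2) : z ∈ U := by
    rwa [mem_ball, dist_eq, ← sq_lt_sq₀ (norm_nonneg _) (by norm_num)]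
  obtain ⟨C, hC0, hC⟩ := exists_norm_zetaApprox_succ_sub_le
  have hbound : ∀ n : ℕ, ∀ s ∈ U, ‖zetaApprox (n + 1 + 1) s - zetaApprox (n + 1) s‖
      ≤ C * 60 * ((n + 1 : ℕ) : ℝ) ^ (-(5 / 4) : ℝ) := by
    intro n s hs
    obtain ⟨hre, hnorm⟩ := hU s hs
    have hpoly : ‖s * (s + 1) * (s + 2)‖ ≤ 60 := by
      rw [norm_mul, norm_mul]
      have h1 := norm_add_le s 1
      have h2 := norm_add_le s 2
      norm_num at h1 h2
      calc ‖s‖ * ‖s + 1‖ * ‖s + 2‖ ≤ 3 * 4 * 5 := by gcongr <;> linarith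
        _ = 60 := by norm_num
    have hrpow := Real.rpow_le_rpow_of_exponent_le (x := ((n + 1 : ℕ) : ℝ))
      (by simp) (show -s.re - 3 ≤ -(5 / 4) by linarith)
    refine (hC s (hpole s hs) (by linarith) (n + 1) n.succ_ne_zero).trans ?_
    gcongr
  have hsummable : Summable fun n : ℕ => C * 60 * ((n + 1 : ℕ) : ℝ) ^ (-(5 / 4) : ℝ) :=
    ((summable_nat_add_iff 1).mpr (Real.summable_nat_rpow.mpr (by norm_num))).mul_left _
  have hzeta : AnalyticOnNhd ℂ riemannZeta U :=
    DifferentiableOn.analyticOnNhd (fun s hs =>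
      (differentiableAt_riemannZeta (hpole s hs)).differentiableWithinAt) isOpen_ball
  have hlim : ∀ᶠ s in 𝓝 (9 / 8 + I), Tendsto (fun n => zetaApprox (n + 1) s) atTop
      (𝓝 (riemannZeta s)) := by
    filter_upwards [(isOpen_lt continuous_const continuous_re).mem_nhds
      (show (1 : ℝ) < (9 / 8 + I).re by norm_num)] with s hs
    exact (tendsto_zetaApprox hs).comp (tendsto_add_atTop_nat 1)
  refine (tendsto_add_atTop_iff_nat 1).mp (tendsto_deriv_of_summable_norm_sub isOpen_ball
    (convex_ball _ _).isPreconnected (fun n s hs => ?_) hsummable hbound hzeta ?_ hlim ?_)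
  · exact (differentiableAt_zetaApprox n.succ_ne_zero (hpole s hs)).differentiableWithinAt
  · exact hmem _ (by rw [Complex.sq_norm, normSq_apply]; norm_num)
  · exact hmem _ (by rw [Complex.sq_norm, normSq_apply]; norm_num)

/-- As `n → ∞`,
`Σ_{k=1}^{n} k ln k = (n²/2 + n/2 + 1/12) ln n − n²/4 + 1/12 − ζ'(−1) + o(1)`,
where `ζ` is the Riemann zeta function. -/
theorem hyperfactorial_asymptotics :
    Tendsto (fun n : ℕ =>
        (((∑ k ∈ Finset.Icc 1 n, (k : ℝ) * Real.log (k : ℝ))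
          - (((n : ℝ) ^ 2 / 2 + (n : ℝ) / 2 + 1 / 12) * Real.log (n : ℝ)
              - (n : ℝ) ^ 2 / 4 + 1 / 12) : ℝ) : ℂ))
      atTop (nhds (-(deriv riemannZeta (-1)))) := by
  refine tendsto_deriv_zetaApprox_neg_one.neg.congr' ?_
  filter_upwards [eventually_ne_atTop 0] with N hN
  rw [(hasDerivAt_zetaApprox_neg_one hN).deriv, neg_neg]
end

section
/- Let η(t) be the function defined for t = e^{−2iα} by η = n²η₀ + n η₁ + η₂ + O(1/ρ) with η₀(t) = (1−√t)²/4. If η satisfies the σ-form of Painlevé VI: (η' − n²/4)(t(t−1)η'')² + [2(η' − n²/4)(tη' − η) − (η')² + (n²/2)η']² = (η')⁴, then necessarily η₁(t) ≡ 0 and η₂(t) = −(1+√t)²/16. -/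
/-!
Put `s = √t`, `ε = 1/n` and `W = 2(η' - n²/4)(tη' - η) + n²η'/2`. The σ-form factors as
`(η' - n²/4)(t(t-1)η'')² + W (W - 2η'²)`, and after dividing by `n⁸` it becomes a polynomial
`G(ε)` in `ε`. Since `η₀ = (1-s)²/4` solves the leading-order equation, `W/n⁴` vanishes at
`ε = 0`, and its linear part is `δη/(2s)`. Hence `G(ε) = ε K(ε)` with
`K(0) = -(s-1)² η₁/(16 s³)`, and `F/n² = n⁵ K(1/n) → 0` forces `K(0) = 0`, i.e. `η₁ = 0` for
`t ≠ 1`. With `η₁ ≡ 0`, `G(ε) = ε² L(ε)` with `L(0) = -(s-1)²(η₂ + (1+s)²/16)/(16 s³)`, which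
gives `η₂` for `t ≠ 1`. Both identities extend to `t = 1` by continuity.
-/

open Filter Topology

/-- The paper's `η₀(t) = (1 - √t)²/4`, with `√t = t ^ (1/2)` the principal branch. -/
noncomputable def eta0 (t : ℂ) : ℂ := (1 - t ^ ((1 : ℂ) / 2)) ^ 2 / 4

noncomputable def etaExpansion (η₁ η₂ : ℂ → ℂ) (m w : ℂ) : ℂ := m ^ 2 * eta0 w + m * η₁ w + η₂ w

/-- Jimbo's σ-form of Painlevé VI (left side minus right side) with `θ_∞ = -θ₀ = m`,
`θ₁ = θ_t = 0`, at `η' = p`, `η'' = p₂`, `η = e`. -/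
noncomputable def sigmaForm (m t p p₂ e : ℂ) : ℂ :=
  (p - m ^ 2 / 4) * (t * (t - 1) * p₂) ^ 2
    + (2 * (p - m ^ 2 / 4) * (t * p - e) - p ^ 2 + (m ^ 2 / 2) * p) ^ 2 - p ^ 4

noncomputable def sigmaFormAlongExpansion (η₁ η₂ : ℂ → ℂ) (m t : ℂ) : ℂ :=
  sigmaForm m t (deriv (etaExpansion η₁ η₂ m) t) (deriv (deriv (etaExpansion η₁ η₂ m)) t)
    (etaExpansion η₁ η₂ m t)

/-- `n⁻⁸` times the σ-form along the ansatz at `t = s²`, as a function of `ε = 1/n`; here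
`(x₀, x₁, x₂)` and `(y₀, y₁, y₂)` are the values of `η₁` and `η₂` and of their first two
derivatives at `t`. The `η''` slot carries an extra `ε` because `η''` has weight 3 in
`sigmaForm_homogeneous`. -/
noncomputable def sigmaFormScaled (s x₀ x₁ x₂ y₀ y₁ y₂ ε : ℂ) : ℂ :=
  sigmaForm 1 (s ^ 2) (1 / 4 - 1 / (4 * s) + ε * x₁ + ε ^ 2 * y₁)
    (ε * (1 / (8 * s ^ 3) + ε * x₂ + ε ^ 2 * y₂)) ((1 - s) ^ 2 / 4 + ε * x₀ + ε ^ 2 * y₀)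

theorem sigmaForm_homogeneous (m t p p₂ e : ℂ) :
    sigmaForm m t (m ^ 2 * p) (m ^ 3 * p₂) (m ^ 2 * e) = m ^ 8 * sigmaForm 1 t p p₂ e := by
  unfold sigmaForm; ring

theorem sigmaForm_div_sq {m : ℂ} (hm : m ≠ 0) (t a₀ a₁ a₂ d₀ d₁ d₂ e₀ e₁ e₂ : ℂ) :
    sigmaForm m t (m ^ 2 * a₀ + m * a₁ + a₂) (m ^ 2 * d₀ + m * d₁ + d₂)
        (m ^ 2 * e₀ + m * e₁ + e₂) / m ^ 2
      = m ^ 6 * sigmaForm 1 t (a₀ + m⁻¹ * a₁ + m⁻¹ ^ 2 * a₂)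
          (m⁻¹ * (d₀ + m⁻¹ * d₁ + m⁻¹ ^ 2 * d₂)) (e₀ + m⁻¹ * e₁ + m⁻¹ ^ 2 * e₂) := by
  have weight2 (x₀ x₁ x₂ : ℂ) :
      m ^ 2 * x₀ + m * x₁ + x₂ = m ^ 2 * (x₀ + m⁻¹ * x₁ + m⁻¹ ^ 2 * x₂) := by
    field_simp
  have weight3 (x₀ x₁ x₂ : ℂ) :
      m ^ 2 * x₀ + m * x₁ + x₂ = m ^ 3 * (m⁻¹ * (x₀ + m⁻¹ * x₁ + m⁻¹ ^ 2 * x₂)) := by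
    field_simp
  rw [weight2 a₀, weight3 d₀, weight2 e₀, sigmaForm_homogeneous]
  field_simp

theorem eq_zero_of_tendsto_pow_mul_inv {G K : ℂ → ℂ} {j k : ℕ} (hjk : j < k)
    (hG : ∀ ε, G ε = ε ^ j * K ε) (hK : ContinuousAt K 0)
    (h : Tendsto (fun n : ℝ => (n : ℂ) ^ k * G (n : ℂ)⁻¹) atTop (𝓝 0)) : K 0 = 0 := by
  have hinv : Tendsto (fun n : ℝ => (n : ℂ)⁻¹) atTop (𝓝 0) := by
    simpa [Function.comp_def] using
      (Complex.continuous_ofReal.tendsto 0).comp tendsto_inv_atTop_zero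
  have hpow : Tendsto (fun n : ℝ => (n : ℂ)⁻¹ ^ (k - j)) atTop (𝓝 0) := by
    simpa [Nat.sub_ne_zero_of_lt hjk] using hinv.pow (k - j)
  refine tendsto_nhds_unique (hK.tendsto.comp hinv) ((zero_mul (0 : ℂ) ▸ h.mul hpow).congr' ?_)
  filter_upwards [eventually_ne_atTop 0] with n hn
  have hn' : (n : ℂ) ≠ 0 := Complex.ofReal_ne_zero.mpr hn
  rw [hG, Function.comp_apply, inv_pow, inv_pow, ← pow_sub_mul_pow _ hjk.le]
  field_simp

theorem sigmaFormScaled_first_order {s x₀ x₁ x₂ y₀ y₁ y₂ : ℂ} (hs : s ≠ 0)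
    (h : Tendsto (fun n : ℝ => (n : ℂ) ^ 6 * sigmaFormScaled s x₀ x₁ x₂ y₀ y₁ y₂ (n : ℂ)⁻¹)
      atTop (𝓝 0)) :
    (s - 1) ^ 2 * x₀ = 0 := by
  set a : ℂ → ℂ := fun ε => 1 / 4 - 1 / (4 * s) + ε * x₁ + ε ^ 2 * y₁
  -- `ε v(ε)` is the bracket `W/n⁴`; it has no constant term because `η₀` solves the
  -- leading-order equation.
  set v : ℂ → ℂ := fun ε =>
    (x₀ + ε * y₀) / (2 * s) + 2 * (x₁ + ε * y₁) * (s ^ 2 * ε * (x₁ + ε * y₁) - ε * (x₀ + ε * y₀))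
  set K : ℂ → ℂ := fun ε =>
    ε * (a ε - 1 / 4) * (s ^ 2 * (s ^ 2 - 1) * (1 / (8 * s ^ 3) + ε * x₂ + ε ^ 2 * y₂)) ^ 2
      + v ε * (ε * v ε - 2 * a ε ^ 2)
  have hG (ε : ℂ) : sigmaFormScaled s x₀ x₁ x₂ y₀ y₁ y₂ ε = ε ^ 1 * K ε := by
    simp only [sigmaFormScaled, sigmaForm, K, a, v]
    field_simp
    ring
  have hK0 : K 0 = -((s - 1) ^ 2 * x₀) / (16 * s ^ 3) := by
    simp only [K, a, v]
    field_simp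
    ring
  have := eq_zero_of_tendsto_pow_mul_inv (by norm_num) hG (by fun_prop) h
  rw [hK0, div_eq_zero_iff, neg_eq_zero] at this
  exact this.resolve_right (mul_ne_zero (by norm_num) (pow_ne_zero 3 hs))

theorem sigmaFormScaled_second_order {s y₀ y₁ y₂ : ℂ} (hs : s ≠ 0)
    (h : Tendsto (fun n : ℝ => (n : ℂ) ^ 6 * sigmaFormScaled s 0 0 0 y₀ y₁ y₂ (n : ℂ)⁻¹)
      atTop (𝓝 0)) :
    (s - 1) ^ 2 * (y₀ + (1 + s) ^ 2 / 16) = 0 := by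
  set a : ℂ → ℂ := fun ε => 1 / 4 - 1 / (4 * s) + ε ^ 2 * y₁
  set v : ℂ → ℂ := fun ε => y₀ / (2 * s) + 2 * ε ^ 2 * y₁ * (s ^ 2 * y₁ - y₀)
  set L : ℂ → ℂ := fun ε =>
    (a ε - 1 / 4) * (s ^ 2 * (s ^ 2 - 1) * (1 / (8 * s ^ 3) + ε ^ 2 * y₂)) ^ 2
      + v ε * (ε ^ 2 * v ε - 2 * a ε ^ 2)
  have hG (ε : ℂ) : sigmaFormScaled s 0 0 0 y₀ y₁ y₂ ε = ε ^ 2 * L ε := by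
    simp only [sigmaFormScaled, sigmaForm, L, a, v]
    field_simp
    ring
  have hL0 : L 0 = -((s - 1) ^ 2 * (y₀ + (1 + s) ^ 2 / 16)) / (16 * s ^ 3) := by
    simp only [L, a, v]
    field_simp
    ring
  have := eq_zero_of_tendsto_pow_mul_inv (by norm_num) hG (by fun_prop) h
  rw [hL0, div_eq_zero_iff, neg_eq_zero] at this
  exact this.resolve_right (mul_ne_zero (by norm_num) (pow_ne_zero 3 hs))

theorem cpow_half_sq (t : ℂ) : (t ^ ((1 : ℂ) / 2)) ^ 2 = t := by
  rw [one_div]; exact Complex.cpow_ofNat_inv_pow t 2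

theorem cpow_half_ne_zero {t : ℂ} (ht : t ≠ 0) : t ^ ((1 : ℂ) / 2) ≠ 0 :=
  fun h => ht (by rw [← cpow_half_sq t, h, zero_pow two_ne_zero])

theorem hasDerivAt_cpow_half {t : ℂ} (ht : t ∈ Complex.slitPlane) :
    HasDerivAt (· ^ ((1 : ℂ) / 2)) (1 / (2 * t ^ ((1 : ℂ) / 2))) t := by
  have hs := cpow_half_ne_zero (Complex.slitPlane_ne_zero ht)
  refine (Complex.hasStrictDerivAt_cpow_const (c := (1 : ℂ) / 2) ht).hasDerivAt.congr_deriv ?_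
  rw [Complex.cpow_sub _ _ (Complex.slitPlane_ne_zero ht), Complex.cpow_one]
  field_simp
  rw [cpow_half_sq, div_self (Complex.slitPlane_ne_zero ht)]

theorem hasDerivAt_eta0 {t : ℂ} (ht : t ∈ Complex.slitPlane) :
    HasDerivAt eta0 (1 / 4 - 1 / (4 * t ^ ((1 : ℂ) / 2))) t := by
  have hs := cpow_half_ne_zero (Complex.slitPlane_ne_zero ht)
  refine ((((hasDerivAt_cpow_half ht).const_sub 1).pow 2).div_const 4).congr_deriv ?_
  field_simp
  ring

theorem hasDerivAt_deriv_eta0 {t : ℂ} (ht : t ∈ Complex.slitPlane) :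
    HasDerivAt (deriv eta0) (1 / (8 * (t ^ ((1 : ℂ) / 2)) ^ 3)) t := by
  have hs := cpow_half_ne_zero (Complex.slitPlane_ne_zero ht)
  have heq : deriv eta0 =ᶠ[𝓝 t] fun w => 1 / 4 - 1 / (4 * w ^ ((1 : ℂ) / 2)) := by
    filter_upwards [Complex.isOpen_slitPlane.mem_nhds ht] with w hw
      using (hasDerivAt_eta0 hw).deriv
  refine HasDerivAt.congr_of_eventuallyEq ?_ heq
  convert (((hasDerivAt_cpow_half ht).const_mul 4).inv (by simpa using hs)).const_sub (1 / 4)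
    using 1
  · ext w; simp [one_div]
  · field_simp; ring

theorem analyticAt_eta0 {t : ℂ} (ht : t ∈ Complex.slitPlane) : AnalyticAt ℂ eta0 t :=
  ((analyticAt_const.sub (analyticAt_id.cpow analyticAt_const ht)).pow 2).div_const

theorem deriv_quadratic_comb_eventuallyEq {f₀ f₁ f₂ : ℂ → ℂ} {t : ℂ} (h₀ : AnalyticAt ℂ f₀ t)
    (h₁ : AnalyticAt ℂ f₁ t) (h₂ : AnalyticAt ℂ f₂ t) (m : ℂ) :
    deriv (fun w => m ^ 2 * f₀ w + m * f₁ w + f₂ w)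
      =ᶠ[𝓝 t] fun w => m ^ 2 * deriv f₀ w + m * deriv f₁ w + deriv f₂ w := by
  filter_upwards [h₀.eventually_analyticAt, h₁.eventually_analyticAt, h₂.eventually_analyticAt]
    with w h₀ h₁ h₂
  exact (((h₀.differentiableAt.hasDerivAt.const_mul _).add
    (h₁.differentiableAt.hasDerivAt.const_mul _)).add h₂.differentiableAt.hasDerivAt).deriv

theorem deriv_deriv_quadratic_comb {f₀ f₁ f₂ : ℂ → ℂ} {t : ℂ} (h₀ : AnalyticAt ℂ f₀ t)
    (h₁ : AnalyticAt ℂ f₁ t) (h₂ : AnalyticAt ℂ f₂ t) (m : ℂ) :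
    deriv (deriv (fun w => m ^ 2 * f₀ w + m * f₁ w + f₂ w)) t
      = m ^ 2 * deriv (deriv f₀) t + m * deriv (deriv f₁) t + deriv (deriv f₂) t := by
  rw [(deriv_quadratic_comb_eventuallyEq h₀ h₁ h₂ m).deriv_eq]
  exact (deriv_quadratic_comb_eventuallyEq h₀.deriv h₁.deriv h₂.deriv m).eq_of_nhds

theorem sigmaFormAlongExpansion_div_sq {η₁ η₂ : ℂ → ℂ} {t : ℂ} (ht : t ∈ Complex.slitPlane)
    (h₁ : AnalyticAt ℂ η₁ t) (h₂ : AnalyticAt ℂ η₂ t) {m : ℂ} (hm : m ≠ 0) :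
    sigmaFormAlongExpansion η₁ η₂ m t / m ^ 2
      = m ^ 6 * sigmaFormScaled (t ^ ((1 : ℂ) / 2)) (η₁ t) (deriv η₁ t) (deriv (deriv η₁) t)
          (η₂ t) (deriv η₂ t) (deriv (deriv η₂) t) m⁻¹ := by
  have h₀ := analyticAt_eta0 ht
  unfold sigmaFormAlongExpansion etaExpansion
  rw [(deriv_quadratic_comb_eventuallyEq h₀ h₁ h₂ m).eq_of_nhds,
    deriv_deriv_quadratic_comb h₀ h₁ h₂ m, (hasDerivAt_eta0 ht).deriv,
    (hasDerivAt_deriv_eta0 ht).deriv, sigmaForm_div_sq hm]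
  simp only [sigmaFormScaled, cpow_half_sq, eta0]

theorem tendsto_sigmaFormScaled {η₁ η₂ : ℂ → ℂ} {t : ℂ} (ht : t ∈ Complex.slitPlane)
    (h₁ : AnalyticAt ℂ η₁ t) (h₂ : AnalyticAt ℂ η₂ t)
    (h : Tendsto (fun n : ℝ => sigmaFormAlongExpansion η₁ η₂ n t / (n : ℂ) ^ 2) atTop (𝓝 0)) :
    Tendsto (fun n : ℝ => (n : ℂ) ^ 6 * sigmaFormScaled (t ^ ((1 : ℂ) / 2)) (η₁ t) (deriv η₁ t)
      (deriv (deriv η₁) t) (η₂ t) (deriv η₂ t) (deriv (deriv η₂) t) (n : ℂ)⁻¹) atTop (𝓝 0) :=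
  h.congr' <| (eventually_ne_atTop 0).mono fun _ hn =>
    sigmaFormAlongExpansion_div_sq ht h₁ h₂ (Complex.ofReal_ne_zero.mpr hn)

theorem cpow_half_sub_one_sq_ne_zero {t : ℂ} (ht : t ≠ 1) : (t ^ ((1 : ℂ) / 2) - 1) ^ 2 ≠ 0 :=
  pow_ne_zero 2 fun h => ht (by rw [← cpow_half_sq t, sub_eq_zero.mp h, one_pow])

theorem eq_zero_of_tendsto_sigmaFormAlongExpansion {η₁ η₂ : ℂ → ℂ} {t : ℂ}
    (ht : t ∈ Complex.slitPlane) (ht1 : t ≠ 1) (h₁ : AnalyticAt ℂ η₁ t) (h₂ : AnalyticAt ℂ η₂ t)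
    (h : Tendsto (fun n : ℝ => sigmaFormAlongExpansion η₁ η₂ n t / (n : ℂ) ^ 2) atTop (𝓝 0)) :
    η₁ t = 0 :=
  (mul_eq_zero.mp (sigmaFormScaled_first_order (cpow_half_ne_zero (Complex.slitPlane_ne_zero ht))
    (tendsto_sigmaFormScaled ht h₁ h₂ h))).resolve_left (cpow_half_sub_one_sq_ne_zero ht1)

theorem eq_of_tendsto_sigmaFormAlongExpansion {η₁ η₂ : ℂ → ℂ} {t : ℂ}
    (ht : t ∈ Complex.slitPlane) (ht1 : t ≠ 1) (h₁ : AnalyticAt ℂ η₁ t) (h₂ : AnalyticAt ℂ η₂ t)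
    (hη₁ : η₁ =ᶠ[𝓝 t] 0)
    (h : Tendsto (fun n : ℝ => sigmaFormAlongExpansion η₁ η₂ n t / (n : ℂ) ^ 2) atTop (𝓝 0)) :
    η₂ t = -((1 + t ^ ((1 : ℂ) / 2)) ^ 2) / 16 := by
  have hd₁ : deriv η₁ =ᶠ[𝓝 t] 0 := deriv_zero (𝕜 := ℂ) (F := ℂ) ▸ hη₁.deriv
  have hdd₁ : deriv (deriv η₁) =ᶠ[𝓝 t] 0 := deriv_zero (𝕜 := ℂ) (F := ℂ) ▸ hd₁.deriv
  have hlim := tendsto_sigmaFormScaled ht h₁ h₂ h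
  rw [hη₁.eq_of_nhds, hd₁.eq_of_nhds, hdd₁.eq_of_nhds] at hlim
  have := (mul_eq_zero.mp (sigmaFormScaled_second_order
    (cpow_half_ne_zero (Complex.slitPlane_ne_zero ht)) hlim)).resolve_left
    (cpow_half_sub_one_sq_ne_zero ht1)
  linear_combination this

theorem eqOn_of_eqOn_diff_singleton {X Y : Type*} [TopologicalSpace X] [TopologicalSpace Y]
    [T2Space Y] {U : Set X} {x : X} [(𝓝[≠] x).NeBot] {f g : X → Y} (hU : IsOpen U)
    (hf : ContinuousOn f U) (hg : ContinuousOn g U) (h : Set.EqOn f g (U \ {x})) :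
    Set.EqOn f g U :=
  h.of_subset_closure hf hg Set.sdiff_subset
    ((dense_compl_singleton x).open_subset_closure_inter hU)

/-- Substituting the expansion
`η(n,t) = n²η₀(t) + nη₁(t) + η₂(t)`, `η₀(t) = (1−√t)²/4`, into the Jimbo
σ-form of Painlevé VI
`(η' − n²/4)(t(t−1)η'')² + [2(η' − n²/4)(tη' − η) − (η')² + (n²/2)η']² = (η')⁴`
and matching powers of `n` (the equation holding up to `o(n²)` as `n → ∞`)
forces `η₁ ≡ 0` and `η₂(t) = −(1+√t)²/16`. -/
theorem painleveVI_matching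
    (U : Set ℂ) (hU : IsOpen U)
    (hUcut : ∀ t ∈ U, ¬(t.im = 0 ∧ t.re ≤ 0))
    (η₁ η₂ : ℂ → ℂ)
    (h1 : AnalyticOnNhd ℂ η₁ U) (h2 : AnalyticOnNhd ℂ η₂ U)
    (η : ℝ → ℂ → ℂ)
    (hη : η = fun (n : ℝ) (t : ℂ) => (n : ℂ) ^ 2 * ((1 - t ^ ((1 : ℂ) / 2)) ^ 2 / 4)
        + (n : ℂ) * η₁ t + η₂ t)
    (F : ℝ → ℂ → ℂ)
    (hF : F = fun (n : ℝ) (t : ℂ) =>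
        (deriv (η n) t - (n : ℂ) ^ 2 / 4) * (t * (t - 1) * deriv (deriv (η n)) t) ^ 2
        + (2 * (deriv (η n) t - (n : ℂ) ^ 2 / 4) * (t * deriv (η n) t - η n t)
            - (deriv (η n) t) ^ 2 + ((n : ℂ) ^ 2 / 2) * deriv (η n) t) ^ 2
        - (deriv (η n) t) ^ 4)
    (hmatch : ∀ t ∈ U, Tendsto (fun n : ℝ => F n t / (n : ℂ) ^ 2) atTop (nhds 0)) :
    ∀ t ∈ U, η₁ t = 0 ∧ η₂ t = -((1 + t ^ ((1 : ℂ) / 2)) ^ 2) / 16 := by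
  subst hη hF
  have hslit : U ⊆ Complex.slitPlane := fun t ht => by
    rw [Complex.mem_slitPlane_iff, ← not_le, ← not_and_or, and_comm]
    exact hUcut t ht
  have hη₁ : Set.EqOn η₁ 0 U :=
    eqOn_of_eqOn_diff_singleton (x := 1) hU h1.continuousOn continuousOn_const
      fun t ⟨ht, ht1⟩ => eq_zero_of_tendsto_sigmaFormAlongExpansion (hslit ht) ht1
        (h1 t ht) (h2 t ht) (hmatch t ht)
  have hη₂ : Set.EqOn η₂ (fun t => -((1 + t ^ ((1 : ℂ) / 2)) ^ 2) / 16) U :=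
    eqOn_of_eqOn_diff_singleton (x := 1) hU h2.continuousOn
      (((continuousOn_const.add (continuousOn_id.cpow_const hslit)).pow 2).neg.div_const 16)
      fun t ⟨ht, ht1⟩ => eq_of_tendsto_sigmaFormAlongExpansion (hslit ht) ht1 (h1 t ht) (h2 t ht)
        (eventuallyEq_of_mem (hU.mem_nhds ht) hη₁) (hmatch t ht)
  exact fun t ht => ⟨hη₁ ht, hη₂ ht⟩
end
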